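/- arXiv:1405.0396 — 5 statements merged into one kernel-verified Lean document; each statement's English description precedes it below -/
import Mathlib

section
/- Let X be a topological space and T a Hausdorff topological space. For every continuous map a : X → T, the induced homomorphism ⟨a⟩ lies in the subgroup R ⊆ L(X,T). -/
open FreeAbelianGroup in
/-- `L(X,Y)`: the subgroup of `Hom(⟨X⟩,⟨Y⟩)` generated by the homomorphisms `u` such that
each `u⟨x⟩` is `0` or some basis element `⟨y⟩`. -/
def Lgroup (X Y : Type*) : AddSubgroup (FreeAbelianGroup X →+ FreeAbelianGroup Y) :=
  AddSubgroup.closure {u | ∀ x : X, u (of x) = 0 ∨ ∃ y : Y, u (of x) = of y}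

/-- The homomorphism `⟨a⟩ : ⟨X⟩ → ⟨Y⟩` induced by a map `a : X → Y`. -/
def inducedHom {X Y : Type*} (a : X → Y) : FreeAbelianGroup X →+ FreeAbelianGroup Y :=
  FreeAbelianGroup.lift (fun x => FreeAbelianGroup.of (a x))

lemma inducedHom_mem {X Y : Type*} (a : X → Y) : inducedHom a ∈ Lgroup X Y :=
  AddSubgroup.subset_closure (fun x => Or.inr ⟨a x, FreeAbelianGroup.lift_apply_of _ _⟩)

/-- `⟨a⟩` as an element of `L(X,Y)`. -/
def inducedL {X Y : Type*} (a : X → Y) : Lgroup X Y := ⟨inducedHom a, inducedHom_mem a⟩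

/-- A function on continuous maps is a homotopy invariant if it only depends on homotopy
classes. -/
def IsHomotopyInvariant {X Y : Type*} [TopologicalSpace X] [TopologicalSpace Y] {M : Type*}
    [AddCommGroup M] (f : C(X, Y) → M) : Prop :=
  ∀ a b : C(X, Y), a.Homotopic b → f a = f b

/-- A homotopy invariant `f` is straight if it factors as `f a = F ⟨a⟩` for an additive
homomorphism `F : L(X,Y) → M`. -/
def IsStraight {X Y : Type*} [TopologicalSpace X] [TopologicalSpace Y] {M : Type*}
    [AddCommGroup M] (f : C(X, Y) → M) : Prop :=
  ∃ F : Lgroup X Y →+ M, ∀ a : C(X, Y), f a = F (inducedL a)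
open FreeAbelianGroup Classical in
/-- `s_V(u)(x)`: the sum over `t ∈ V` of the coefficient of `⟨t⟩` in `u⟨x⟩`. -/
noncomputable def sV {X T : Type*} (V : Set T) :
    (FreeAbelianGroup X →+ FreeAbelianGroup T) →+ (X → ℤ) where
  toFun u x := (toFinsupp (u (of x))).sum fun t k => if t ∈ V then k else 0
  map_zero' := by
    funext x
    simp
  map_add' u v := by
    funext x
    simp only [AddMonoidHom.add_apply, map_add, Pi.add_apply]
    rw [Finsupp.sum_add_index]
    · intro t _; simp
    · intro t _ k₁ k₂; split_ifs <;> simp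

/-- The subgroup `R(p,q)`: homomorphisms `u` such that for all sufficiently small open
neighbourhoods `V` of `q`, the function `s_V(u)` is constant on some neighbourhood of `p`. -/
noncomputable def Rpq {X T : Type*} [TopologicalSpace X] [TopologicalSpace T] (p : X) (q : T) :
    AddSubgroup (FreeAbelianGroup X →+ FreeAbelianGroup T) where
  carrier := {u | ∃ V₀ : Set T, IsOpen V₀ ∧ q ∈ V₀ ∧ ∀ V : Set T, IsOpen V → q ∈ V → V ⊆ V₀ →
    ∃ U ∈ nhds p, ∃ c : ℤ, ∀ x ∈ U, sV V u x = c}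
  zero_mem' :=
    ⟨Set.univ, isOpen_univ, trivial, fun V _ _ _ =>
      ⟨Set.univ, Filter.univ_mem, 0, fun x _ => by simp [map_zero]⟩⟩
  add_mem' := by
    rintro u v ⟨V₀, hV₀o, hqV₀, hu⟩ ⟨W₀, hW₀o, hqW₀, hv⟩
    refine ⟨V₀ ∩ W₀, hV₀o.inter hW₀o, ⟨hqV₀, hqW₀⟩, fun V hVo hqV hVsub => ?_⟩
    obtain ⟨U₁, hU₁, c₁, hc₁⟩ := hu V hVo hqV (hVsub.trans Set.inter_subset_left)
    obtain ⟨U₂, hU₂, c₂, hc₂⟩ := hv V hVo hqV (hVsub.trans Set.inter_subset_right)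
    refine ⟨U₁ ∩ U₂, Filter.inter_mem hU₁ hU₂, c₁ + c₂, fun x hx => ?_⟩
    rw [map_add]
    simp [hc₁ x hx.1, hc₂ x hx.2]
  neg_mem' := by
    rintro u ⟨V₀, hV₀o, hqV₀, hu⟩
    refine ⟨V₀, hV₀o, hqV₀, fun V hVo hqV hVsub => ?_⟩
    obtain ⟨U, hU, c, hc⟩ := hu V hVo hqV hVsub
    refine ⟨U, hU, -c, fun x hx => ?_⟩
    rw [map_neg]
    simp [hc x hx]

/-- The subgroup `R`: the intersection of the subgroups `R(p,q)` over all `p ∈ X`, `q ∈ T`. -/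
noncomputable def Rsub (X T : Type*) [TopologicalSpace X] [TopologicalSpace T] :
    AddSubgroup (FreeAbelianGroup X →+ FreeAbelianGroup T) :=
  ⨅ p : X, ⨅ q : T, Rpq p q

open Classical in
/-- The homomorphism `e(D,a)` sending `⟨x⟩` to `⟨a(x)⟩` for `x ∈ D` and to `0` otherwise. -/
noncomputable def eHom {X T : Type*} (D : Set X) (a : D → T) :
    FreeAbelianGroup X →+ FreeAbelianGroup T :=
  FreeAbelianGroup.lift fun x =>
    if h : x ∈ D then FreeAbelianGroup.of (a ⟨x, h⟩) else 0

/-- The subgroup `K ⊆ L(X,T)` generated by the homomorphisms `e(D,a)` for `D ⊆ X` closed and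
`a : D → T` continuous. -/
noncomputable def Ksub (X T : Type*) [TopologicalSpace X] [TopologicalSpace T] :
    AddSubgroup (FreeAbelianGroup X →+ FreeAbelianGroup T) :=
  AddSubgroup.closure {u | ∃ (D : Set X) (_ : IsClosed D) (a : C(D, T)), u = eHom D ⇑a}

/-!
`s_V⟨a⟩` is the indicator function of `a⁻¹(V)`. If `a p = q`, it is constantly `1` on the open
neighbourhood `a⁻¹(V)` of `p`. If `a p ≠ q`, separate them by disjoint open sets `W ∋ a p` and
`V₀ ∋ q`; for `V ⊆ V₀` it vanishes on the neighbourhood `a⁻¹(W)` of `p`.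
-/

open Set

section

variable {X T : Type*}

open Classical in
theorem sV_inducedHom_apply (V : Set T) (a : X → T) (x : X) :
    sV V (inducedHom a) x = if a x ∈ V then 1 else 0 := by
  simp [sV, inducedHom, Finsupp.sum_single_index]

variable [TopologicalSpace X] [TopologicalSpace T] {a : C(X, T)} {p : X} {q : T}

theorem inducedHom_mem_Rpq_of_apply_eq (h : a p = q) : inducedHom ⇑a ∈ Rpq p q := by
  refine ⟨univ, isOpen_univ, trivial, fun V hV hqV _ => ?_⟩
  refine ⟨a ⁻¹' V, (hV.preimage a.continuous).mem_nhds (by rwa [mem_preimage, h]), 1,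
    fun x hx => ?_⟩
  simp [sV_inducedHom_apply, mem_preimage.mp hx]

theorem inducedHom_mem_Rpq_of_apply_ne [T2Space T] (h : a p ≠ q) : inducedHom ⇑a ∈ Rpq p q := by
  obtain ⟨V₀, W, hV₀, hW, hqV₀, hpW, hdisj⟩ := t2_separation h.symm
  refine ⟨V₀, hV₀, hqV₀, fun V _ _ hVV₀ => ?_⟩
  refine ⟨a ⁻¹' W, (hW.preimage a.continuous).mem_nhds hpW, 0, fun x hx => ?_⟩
  have hxV : a x ∉ V := fun hxV => disjoint_left.mp hdisj (hVV₀ hxV) hx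
  simp [sV_inducedHom_apply, hxV]

end

/-- **Lemma 6.1.** For every continuous map `a : X → T` with `T` Hausdorff, the induced
homomorphism `⟨a⟩ ∈ L(X,T)` lies in the subgroup `R`. -/
theorem inducedHom_mem_Rsub (X T : Type*) [TopologicalSpace X] [TopologicalSpace T]
    [T2Space T] (a : C(X, T)) :
    inducedHom ⇑a ∈ Lgroup X T ∧ inducedHom ⇑a ∈ Rsub X T := by
  refine ⟨inducedHom_mem _, ?_⟩
  simp only [Rsub, AddSubgroup.mem_iInf]
  intro p q
  obtain h | h := eq_or_ne (a p) q
  · exact inducedHom_mem_Rpq_of_apply_eq h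
  · exact inducedHom_mem_Rpq_of_apply_ne h
end

section
/- Let X be a topological space and T a Hausdorff topological space. Then the quotient abelian group L(X,T)/R is a free abelian group. -/
/-! For `u ∈ L(X,T)` the integers `s_V(u)(x) - s_V(u)(p)` are bounded, so every ultrafilter `ω`
on the triples `(x, p, V)` gives them a limit, and `u ↦ (ω ↦ limit)` is additive with locally
constant values. Membership in `R` says that this quantity is eventually `0` as `x → p`, for all
open `V ∋ q` inside some open `V₀ ∋ q`. So restrict to the closed set `Z` (`limitPoints`) of
ultrafilters lying, for every choice of open neighbourhoods `V₀(p,q)`, in the closure of the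
images of `U → p` under `x ↦ (x, p, V)` with `q ∈ V ⊆ V₀(p,q)`: by compactness of the ultrafilter
space a single choice works for all `(p,q)`, so the kernel of `L → C(Z, ℤ)` is exactly `L ∩ R`.
Hence `L/R` embeds in `C(Z, ℤ)`, which is free by Nöbeling's theorem since `Z` is profinite, and
subgroups of free abelian groups are free. -/

open Set Filter Topology

theorem Finsupp.linearIndependent_of_triangular {R ι : Type*} [CommRing R] [NoZeroDivisors R]
    [LinearOrder ι] {s : Set ι} (v : ι → ι →₀ R)
    (hsupp : ∀ i ∈ s, v i ∈ Finsupp.supported R R (Iic i)) (hdiag : ∀ i ∈ s, v i i ≠ 0) :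
    LinearIndependent R (fun i : s => v i) := by
  classical
  rw [linearIndependent_iff']
  intro t c hsum
  by_contra! hc
  obtain ⟨k, hk, hmax⟩ := (t.filter (c · ≠ 0)).exists_max_image Subtype.val
    (by simpa [Finset.filter_nonempty_iff] using hc)
  have hk' := (Finset.mem_filter.1 hk).2
  have hval : (∑ j ∈ t, c j • v j) k = c k * v k k := by
    rw [Finset.sum_apply', Finset.sum_eq_single k]
    · rfl
    · intro j hj hjk
      by_cases hcj : c j = 0
      · simp [hcj]
      have hjk' : (j : ι) < k :=
        lt_of_le_of_ne (hmax j (Finset.mem_filter.2 ⟨hj, hcj⟩)) (Subtype.coe_injective.ne hjk)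
      have : v j k = 0 := Finsupp.notMem_support_iff.1 fun h =>
        (hjk'.not_ge (hsupp j j.2 h))
      simp [this]
    · exact fun h => absurd (Finset.mem_filter.1 hk).1 h
  rw [hsum] at hval
  exact mul_ne_zero hk' (hdiag k k.2) hval.symm

namespace Submodule

variable {R ι : Type*} [CommRing R] [LinearOrder ι] [IsPrincipalIdealRing R]
    (N : Submodule R (ι →₀ R))

noncomputable def leadingIdeal (i : ι) : Ideal R :=
  (N ⊓ Finsupp.supported R R (Iic i)).map (Finsupp.lapply i)

noncomputable def leadingGen (i : ι) : R := IsPrincipal.generator (N.leadingIdeal i)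

theorem exists_leadingVector (i : ι) :
    ∃ v ∈ N ⊓ Finsupp.supported R R (Iic i), v i = N.leadingGen i :=
  mem_map.1 (IsPrincipal.generator_mem (N.leadingIdeal i))

noncomputable def leadingVector (i : ι) : ι →₀ R := (N.exists_leadingVector i).choose

theorem leadingVector_mem (i : ι) : N.leadingVector i ∈ N ⊓ Finsupp.supported R R (Iic i) :=
  (N.exists_leadingVector i).choose_spec.1

theorem leadingVector_apply_self (i : ι) : N.leadingVector i i = N.leadingGen i :=
  (N.exists_leadingVector i).choose_spec.2

variable {N}

theorem exists_mem_span_leadingVector_apply_eq {i : ι} {f : ι →₀ R}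
    (hf : f ∈ N ⊓ Finsupp.supported R R (Iic i)) :
    ∃ t ∈ span R (range fun j : {j // N.leadingGen j ≠ 0} => N.leadingVector j),
      t ∈ N ⊓ Finsupp.supported R R (Iic i) ∧ t i = f i := by
  obtain ⟨k, hk⟩ := (IsPrincipal.mem_iff_eq_smul_generator (N.leadingIdeal i)).1
    (mem_map_of_mem (f := Finsupp.lapply i) hf)
  change f i = k * N.leadingGen i at hk
  by_cases hgen : N.leadingGen i = 0
  · exact ⟨0, zero_mem _, zero_mem _, by simp [hk, hgen]⟩
  · refine ⟨k • N.leadingVector i, smul_mem _ _ (subset_span ⟨⟨i, hgen⟩, rfl⟩),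
      smul_mem _ _ (N.leadingVector_mem i), ?_⟩
    simp [leadingVector_apply_self, hk]

variable (N)

theorem span_leadingVector [WellFoundedLT ι] :
    span R (range fun j : {j // N.leadingGen j ≠ 0} => N.leadingVector j) = N := by
  refine le_antisymm (span_le.2 ?_) fun f hf => ?_
  · rintro _ ⟨j, rfl⟩
    exact (N.leadingVector_mem j).1
  induction hm : f.support.max using WellFoundedLT.induction generalizing f with
  | _ m IH =>
  cases m with
  | bot =>
    rw [Finset.max_eq_bot, Finsupp.support_eq_empty] at hm
    simp [hm]
  | coe i =>
    have hfi : f ∈ N ⊓ Finsupp.supported R R (Iic i) :=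
      ⟨hf, fun j hj => WithBot.coe_le_coe.1 (hm ▸ Finset.le_max hj)⟩
    obtain ⟨t, ht, htN, hti⟩ := exists_mem_span_leadingVector_apply_eq hfi
    have hlt : (f - t).support.max < i := by
      refine (Finset.sup_lt_iff (WithBot.bot_lt_coe i)).2 fun j hj => WithBot.coe_lt_coe.2 ?_
      refine lt_of_le_of_ne ?_ fun hji => by simp [hji, hti] at hj
      rcases Finset.mem_union.1 (Finsupp.support_sub hj) with hj | hj
      exacts [hfi.2 hj, htN.2 hj]
    simpa using add_mem (IH _ hlt _ (sub_mem hf htN.1) rfl) ht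

theorem free_of_pid_finsupp [IsDomain R] [WellFoundedLT ι] : Module.Free R N := by
  have hli := Finsupp.linearIndependent_of_triangular (s := {i | N.leadingGen i ≠ 0})
    N.leadingVector (fun i _ => (N.leadingVector_mem i).2) fun i hi => by rwa [leadingVector_apply_self]
  exact .of_basis <| (Module.Basis.span hli).map (LinearEquiv.ofEq _ _ N.span_leadingVector)

end Submodule

theorem Submodule.free_of_pid {R M : Type*} [CommRing R] [IsDomain R] [IsPrincipalIdealRing R]
    [AddCommGroup M] [Module R M] [Module.Free R M] (N : Submodule R M) : Module.Free R N := by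
  let b := Module.Free.chooseBasis R M
  obtain ⟨_, _⟩ := exists_wellFoundedLT (α := Module.Free.ChooseBasisIndex R M)
  have := (N.map b.repr.toLinearMap).free_of_pid_finsupp
  exact Module.Free.of_equiv (N.equivMapOfInjective _ b.repr.injective).symm

namespace Ultrafilter

variable {α β : Type*} [TopologicalSpace β] [DiscreteTopology β] {f : α → β}

theorem exists_tendsto_of_finite_range (hf : (range f).Finite) (W : Ultrafilter α) :
    ∃ b, Tendsto f W (𝓝 b) := by
  obtain ⟨b, -, hb⟩ := (W.map f).eq_pure_of_finite_mem hf
    (by rw [mem_map, preimage_range]; exact Filter.univ_mem)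
  refine ⟨b, ?_⟩
  rw [nhds_discrete, Tendsto, ← coe_map, hb, coe_pure]

variable [Nonempty β]

theorem limUnder_eq_iff (hf : (range f).Finite) {W : Ultrafilter α} {b : β} :
    limUnder (W : Filter α) f = b ↔ ∀ᶠ a in W, f a = b := by
  rw [Filter.limUnder_eq_iff (exists_tendsto_of_finite_range hf W), nhds_discrete, tendsto_pure]

theorem isLocallyConstant_limUnder (hf : (range f).Finite) :
    IsLocallyConstant fun W : Ultrafilter α => limUnder (W : Filter α) f := by
  refine IsLocallyConstant.iff_isOpen_fiber.2 fun b => ?_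
  simp_rw [preimage, mem_singleton_iff, limUnder_eq_iff hf]
  exact ultrafilter_isOpen_basic _

theorem limUnder_add [Add β] [ContinuousAdd β] {g : α → β} (hf : (range f).Finite)
    (hg : (range g).Finite) (W : Ultrafilter α) :
    limUnder (W : Filter α) (f + g) = limUnder (W : Filter α) f + limUnder (W : Filter α) g :=
  ((tendsto_nhds_limUnder (exists_tendsto_of_finite_range hf W)).add
    (tendsto_nhds_limUnder (exists_tendsto_of_finite_range hg W))).limUnder_eq

end Ultrafilter

section sV

variable {X T : Type*}

theorem exists_abs_sV_le_of_mem_Lgroup {u : FreeAbelianGroup X →+ FreeAbelianGroup T}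
    (hu : u ∈ Lgroup X T) : ∃ n : ℤ, ∀ (V : Set T) (x : X), |sV V u x| ≤ n := by
  classical
  induction hu using AddSubgroup.closure_induction with
  | mem u hu =>
    refine ⟨1, fun V x => ?_⟩
    change |(FreeAbelianGroup.toFinsupp (u (.of x))).sum fun t k => if t ∈ V then k else 0| ≤ 1
    rcases hu x with h | ⟨y, h⟩
    · simp [h]
    · simp only [h, FreeAbelianGroup.toFinsupp_of, Finsupp.sum_single_index, ite_self]
      split_ifs <;> simp
  | zero => exact ⟨0, fun V x => by simp⟩
  | add u v _ _ ihu ihv =>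
    obtain ⟨n, hn⟩ := ihu
    obtain ⟨m, hm⟩ := ihv
    exact ⟨n + m, fun V x => by
      simpa using (abs_add_le _ _).trans (add_le_add (hn V x) (hm V x))⟩
  | neg u _ ihu =>
    obtain ⟨n, hn⟩ := ihu
    exact ⟨n, fun V x => by simpa using hn V x⟩

noncomputable def sVDiff :
    (FreeAbelianGroup X →+ FreeAbelianGroup T) →+ (X × X × Set T → ℤ) where
  toFun u z := sV z.2.2 u z.1 - sV z.2.2 u z.2.1
  map_zero' := by ext; simp
  map_add' u v := by ext; simp only [map_add, Pi.add_apply]; ring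

theorem finite_range_sVDiff {u : FreeAbelianGroup X →+ FreeAbelianGroup T}
    (hu : u ∈ Lgroup X T) : (range (sVDiff u)).Finite := by
  obtain ⟨n, hn⟩ := exists_abs_sV_le_of_mem_Lgroup hu
  refine (finite_Icc (-(2 * n)) (2 * n)).subset ?_
  rintro _ ⟨⟨x, p, V⟩, rfl⟩
  have hx := abs_le.1 (hn V x)
  have hp := abs_le.1 (hn V p)
  change -(2 * n) ≤ sV V u x - sV V u p ∧ sV V u x - sV V u p ≤ 2 * n
  constructor <;> linarith

theorem limUnder_map_sVDiff_eq_zero_iff {u : FreeAbelianGroup X →+ FreeAbelianGroup T}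
    (hu : u ∈ Lgroup X T) (U : Ultrafilter X) (p : X) (V : Set T) :
    limUnder ((U.map (·, p, V) : Ultrafilter (X × X × Set T)) : Filter _) (sVDiff u) = 0 ↔
      ∀ᶠ x in U, sV V u x = sV V u p := by
  rw [Ultrafilter.limUnder_eq_iff (finite_range_sVDiff hu), Ultrafilter.coe_map, eventually_map]
  exact eventually_congr (Eventually.of_forall fun x => sub_eq_zero)

end sV

section LimitPoints

variable (X T : Type*) [TopologicalSpace X] [TopologicalSpace T]

def OpenNhdChoice : Type _ := {c : X → T → Set T // ∀ p q, IsOpen (c p q) ∧ q ∈ c p q}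

instance : Nonempty (OpenNhdChoice X T) :=
  ⟨⟨fun _ _ => univ, fun _ _ => ⟨isOpen_univ, trivial⟩⟩⟩

def testPoints (c : OpenNhdChoice X T) : Set (Ultrafilter (X × X × Set T)) :=
  {ω | ∃ (p : X) (q : T) (V : Set T) (U : Ultrafilter X), ↑U ≤ 𝓝 p ∧ IsOpen V ∧ q ∈ V ∧
    V ⊆ c.1 p q ∧ ω = U.map (·, p, V)}

def limitPoints : Set (Ultrafilter (X × X × Set T)) :=
  ⋂ c : OpenNhdChoice X T, closure (testPoints X T c)

variable {X T} in
theorem testPoints_mono {c d : OpenNhdChoice X T} (h : ∀ p q, c.1 p q ⊆ d.1 p q) :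
    testPoints X T c ⊆ testPoints X T d := by
  rintro _ ⟨p, q, V, U, hU, hV, hqV, hVc, rfl⟩
  exact ⟨p, q, V, U, hU, hV, hqV, hVc.trans (h p q), rfl⟩

theorem directed_closure_testPoints :
    Directed (· ⊇ ·) fun c : OpenNhdChoice X T => closure (testPoints X T c) := fun c d =>
  ⟨⟨fun p q => c.1 p q ∩ d.1 p q,
    fun p q => ⟨(c.2 p q).1.inter (d.2 p q).1, (c.2 p q).2, (d.2 p q).2⟩⟩,
    closure_mono (testPoints_mono fun _ _ => inter_subset_left),
    closure_mono (testPoints_mono fun _ _ => inter_subset_right)⟩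

theorem compactSpace_limitPoints : CompactSpace (limitPoints X T) :=
  isCompact_iff_compactSpace.1 (isClosed_iInter fun _ => isClosed_closure).isCompact

noncomputable def limitHom : Lgroup X T →+ LocallyConstant (limitPoints X T) ℤ where
  toFun u := ⟨fun ω => limUnder (ω.1 : Filter _) (sVDiff u.1),
    (Ultrafilter.isLocallyConstant_limUnder (finite_range_sVDiff u.2)).comp_continuous
      continuous_subtype_val⟩
  map_zero' := by
    ext ω
    exact (tendsto_const_nhds (x := (0 : ℤ))).limUnder_eq
  map_add' u v := by
    ext ω
    simp only [AddSubgroup.coe_add, map_add, LocallyConstant.coe_mk, LocallyConstant.coe_add,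
      Pi.add_apply]
    exact Ultrafilter.limUnder_add (finite_range_sVDiff u.2) (finite_range_sVDiff v.2) _

end LimitPoints

section Kernel

variable {X T : Type*} [TopologicalSpace X] [TopologicalSpace T]

theorem mem_Rsub_iff {u : FreeAbelianGroup X →+ FreeAbelianGroup T} :
    u ∈ Rsub X T ↔ ∀ p q, ∃ V₀ : Set T, IsOpen V₀ ∧ q ∈ V₀ ∧ ∀ V : Set T, IsOpen V → q ∈ V →
      V ⊆ V₀ → ∃ U ∈ 𝓝 p, ∃ c : ℤ, ∀ x ∈ U, sV V u x = c := by
  simp only [Rsub, AddSubgroup.mem_iInf]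
  rfl

theorem limUnder_sVDiff_eq_zero_of_mem_Rsub {u : FreeAbelianGroup X →+ FreeAbelianGroup T}
    (hL : u ∈ Lgroup X T) (hR : u ∈ Rsub X T) {ω : Ultrafilter (X × X × Set T)}
    (hω : ω ∈ limitPoints X T) : limUnder (ω : Filter _) (sVDiff u) = 0 := by
  choose V₀ hV₀ hqV₀ hsmall using mem_Rsub_iff.1 hR
  let c : OpenNhdChoice X T := ⟨V₀, fun p q => ⟨hV₀ p q, hqV₀ p q⟩⟩
  have hzero : testPoints X T c ⊆ {ω | limUnder (ω : Filter _) (sVDiff u) = 0} := by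
    rintro _ ⟨p, q, V, U, hU, hV, hqV, hVc, rfl⟩
    obtain ⟨W, hW, k, hk⟩ := hsmall p q V hV hqV hVc
    rw [mem_ofPred_eq, limUnder_map_sVDiff_eq_zero_iff hL]
    filter_upwards [hU hW] with x hx
    rw [hk x hx, hk p (mem_of_mem_nhds hW)]
  exact closure_minimal hzero
    ((Ultrafilter.isLocallyConstant_limUnder (finite_range_sVDiff hL)).isClosed_fiber 0)
    (mem_iInter.1 hω c)

theorem mem_Rsub_of_limUnder_sVDiff_eq_zero {u : FreeAbelianGroup X →+ FreeAbelianGroup T}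
    (hL : u ∈ Lgroup X T)
    (h : ∀ ω ∈ limitPoints X T, limUnder (ω : Filter (X × X × Set T)) (sVDiff u) = 0) :
    u ∈ Rsub X T := by
  set O := {ω : Ultrafilter (X × X × Set T) | limUnder (ω : Filter _) (sVDiff u) = 0}
  have hO : IsClopen O :=
    (Ultrafilter.isLocallyConstant_limUnder (finite_range_sVDiff hL)).isClopen_fiber 0
  obtain ⟨c, hc⟩ : ∃ c : OpenNhdChoice X T, Oᶜ ∩ closure (testPoints X T c) = ∅ :=
    hO.isOpen.isClosed_compl.isCompact.elim_directed_family_closed _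
      (fun _ => isClosed_closure)
      (eq_empty_iff_forall_notMem.2 fun ω hω => hω.1 (h ω hω.2))
      (directed_closure_testPoints X T)
  refine mem_Rsub_iff.2 fun p q => ⟨c.1 p q, (c.2 p q).1, (c.2 p q).2, fun V hV hqV hVc =>
    ⟨{x | sV V u x = sV V u p}, ?_, _, fun x hx => hx⟩⟩
  refine mem_iff_ultrafilter.2 fun U hU => (limUnder_map_sVDiff_eq_zero_iff hL U p V).1 ?_
  by_contra hU'
  exact (eq_empty_iff_forall_notMem.1 hc) _
    ⟨hU', subset_closure ⟨p, q, V, U, hU, hV, hqV, hVc, rfl⟩⟩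

variable (X T) in
theorem ker_limitHom : (limitHom X T).ker = (Rsub X T).addSubgroupOf (Lgroup X T) := by
  ext u
  rw [AddMonoidHom.mem_ker, AddSubgroup.mem_addSubgroupOf, LocallyConstant.ext_iff]
  exact ⟨fun h => mem_Rsub_of_limUnder_sVDiff_eq_zero u.2 fun ω hω => h ⟨ω, hω⟩,
    fun h ω => limUnder_sVDiff_eq_zero_of_mem_Rsub u.2 h ω.2⟩

end Kernel

theorem quotient_Lgroup_Rsub_free_general (X T : Type*) [TopologicalSpace X] [TopologicalSpace T] :
    Module.Free ℤ (Lgroup X T ⧸ (Rsub X T).addSubgroupOf (Lgroup X T)) := by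
  have := compactSpace_limitPoints X T
  have := LocallyConstant.freeOfProfinite (Profinite.of (limitPoints X T))
  have := (AddSubgroup.toIntSubmodule (limitHom X T).range).free_of_pid
  let e : _ ≃+ AddSubgroup.toIntSubmodule (limitHom X T).range :=
    (QuotientAddGroup.quotientAddEquivOfEq (ker_limitHom X T).symm).trans
      (QuotientAddGroup.quotientKerEquivRange (limitHom X T))
  exact Module.Free.of_equiv e.toIntLinearEquiv.symm

/-- **Lemma 6.2.** For `X` a space and `T` a Hausdorff space, the quotient abelian group
`L(X,T)/R` is free. -/
theorem quotient_Lgroup_Rsub_free (X T : Type*) [TopologicalSpace X] [TopologicalSpace T]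
    [T2Space T] :
    Module.Free ℤ (Lgroup X T ⧸ (Rsub X T).addSubgroupOf (Lgroup X T)) :=
  quotient_Lgroup_Rsub_free_general X T
end

section
/- Let X be a topological space, T a Hausdorff topological space, D ⊆ X a closed subset, a : D → T a continuous map, p ∈ X, and q ∈ T. If e(D,a) does not lie in R(p,q), then p ∈ D and a(p) = q. -/
/-! If `p ∉ D`, or `p ∈ D` but `a(p) ≠ q`, then near `p` the map `a` avoids some open
neighbourhood `V₀` of `q` (take `V₀ = T` off the closed set `D`; otherwise separate `a(p)` from
`q` and use continuity), so `s_V(e(D,a))` vanishes near `p` for every `V ⊆ V₀`. -/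

open Topology

lemma sV_eHom_eq_zero {X T : Type*} {V : Set T} {D : Set X} {a : D → T} {x : X}
    (hx : ∀ h : x ∈ D, a ⟨x, h⟩ ∉ V) : sV V (eHom D a) x = 0 := by
  classical
  change (eHom D a (FreeAbelianGroup.of x)).toFinsupp.sum (fun t k => if t ∈ V then k else 0) = 0
  rw [eHom, FreeAbelianGroup.lift_apply_of]
  split_ifs with hxD
  · rw [FreeAbelianGroup.toFinsupp_of, Finsupp.sum_single_index (by simp), if_neg (hx hxD)]
  · simp

lemma eHom_mem_Rpq_of_eventually_not_mem {X T : Type*} [TopologicalSpace X] [TopologicalSpace T]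
    {D : Set X} {a : D → T} {p : X} {q : T} {V₀ : Set T} (hV₀ : IsOpen V₀) (hq : q ∈ V₀)
    (hp : ∀ᶠ x in 𝓝 p, ∀ h : x ∈ D, a ⟨x, h⟩ ∉ V₀) : eHom D a ∈ Rpq p q :=
  ⟨V₀, hV₀, hq, fun _ _ _ hV => ⟨_, hp, 0, fun _ hx => sV_eHom_eq_zero fun h => mt (@hV _) (hx h)⟩⟩

lemma ContinuousAt.eventually_forall_mem_subtype {X T : Type*} [TopologicalSpace X]
    [TopologicalSpace T] {D : Set X} {a : D → T} {p : X} (hp : p ∈ D)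
    (ha : ContinuousAt a ⟨p, hp⟩) {W : Set T} (hW : W ∈ 𝓝 (a ⟨p, hp⟩)) :
    ∀ᶠ x in 𝓝 p, ∀ h : x ∈ D, a ⟨x, h⟩ ∈ W := by
  obtain ⟨U, hU, hUW⟩ := (mem_nhds_subtype D _ _).mp (ha hW)
  exact Filter.mem_of_superset hU fun x hx h => hUW (show (⟨x, h⟩ : D).val ∈ U from hx)

/-- **Lemma 6.3.** If `e(D,a) ∉ R(p,q)` then `p ∈ D` and `a(p) = q`. -/
theorem mem_and_eq_of_eHom_not_mem_Rpq (X T : Type*) [TopologicalSpace X] [TopologicalSpace T]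
    [T2Space T] (D : Set X) (hD : IsClosed D) (a : C(D, T)) (p : X) (q : T)
    (h : eHom D ⇑a ∉ Rpq p q) :
    ∃ hp : p ∈ D, a ⟨p, hp⟩ = q := by
  by_contra hne
  push Not at hne
  apply h
  by_cases hp : p ∈ D
  · obtain ⟨W, V₀, hW, hV₀, haW, hqV₀, hdisj⟩ := t2_separation (hne hp)
    have hnear : ∀ᶠ x in 𝓝 p, ∀ h : x ∈ D, a ⟨x, h⟩ ∈ W :=
      a.continuous.continuousAt.eventually_forall_mem_subtype hp (hW.mem_nhds haW)
    exact eHom_mem_Rpq_of_eventually_not_mem hV₀ hqV₀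
      (hnear.mono fun x hx h => hdisj.notMem_of_mem_left (hx h))
  · exact eHom_mem_Rpq_of_eventually_not_mem isOpen_univ trivial
      (Filter.mem_of_superset (hD.isOpen_compl.mem_nhds hp) fun _ hx h => absurd h hx)
end

section
/- Let X be a topological space and T a Hausdorff topological space equipped with an abelian group structure such that for every closed subset D ⊆ X, the pointwise sum and the pointwise negation of continuous maps D → T are again continuous. Then for every u ∈ K ∩ R, the function G(u) : X → T is continuous. -/
/-!
Write `u = ∑ εᵢ e(Dᵢ, fᵢ)` with `Dᵢ` closed and `fᵢ` continuous on `Dᵢ`, so that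
`G(u)(x) = ∑_{x ∈ Dᵢ} εᵢ fᵢ(x)`. For `S` a set of indices, `g_S = ∑_{i ∈ S} εᵢ fᵢ` is continuous
on the closed set `⋂_{i ∈ S} Dᵢ` by the hypotheses on `T`, and `G(u)(x) = g_S(x)` for
`S = {i | x ∈ Dᵢ}`. Near `p` this `S` only contains indices with `p ∈ Dᵢ`, and `fᵢ(x)` is close to
`fᵢ(p)`. Separating the finitely many values `fᵢ(p)` by disjoint neighbourhoods small enough for
`u ∈ R(p, q)`, the local constancy of `s_V(u)` says that each value `q` is counted with the same
signed multiplicity in `S` as in `{i | p ∈ Dᵢ}`; hence `g_S(p) = G(u)(p)`, and continuity of the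
finitely many `g_S` at `p` gives continuity of `G(u)` at `p`.
-/

open FreeAbelianGroup Filter Topology

theorem continuousAt_of_eventually_exists_eq_continuousOn {X T ι : Type*}
    [TopologicalSpace X] [TopologicalSpace T] [Finite ι] {F : X → T} {g : ι → X → T}
    {C : ι → Set X} {p : X} (hg : ∀ i, ContinuousOn (g i) (C i))
    (h : ∀ᶠ x in 𝓝 p, ∃ i, p ∈ C i ∧ x ∈ C i ∧ F x = g i x ∧ g i p = F p) :
    ContinuousAt F p := by
  refine tendsto_def.2 fun W hW => ?_
  have hgW : ∀ i, ∀ᶠ x in 𝓝 p, p ∈ C i → g i p = F p → x ∈ C i → g i x ∈ W := by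
    intro i
    by_cases hi : p ∈ C i ∧ g i p = F p
    · have := hg i p hi.1 (hi.2 ▸ hW)
      filter_upwards [mem_nhdsWithin_iff_eventually.1 this] with x hx _ _ using hx
    · exact Eventually.of_forall fun x hp hgp => absurd ⟨hp, hgp⟩ hi
  filter_upwards [h, eventually_all.2 hgW] with x ⟨i, hp, hx, hFx, hgp⟩ hxW
  rw [Set.mem_preimage, hFx]
  exact hxW i hp hgp hx

def continuousMapsAddSubgroup {C T : Type*} [TopologicalSpace C] [TopologicalSpace T]
    [AddCommGroup T] (hadd : ∀ f g : C → T, Continuous f → Continuous g → Continuous (f + g))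
    (hneg : ∀ f : C → T, Continuous f → Continuous (-f)) : AddSubgroup (C → T) where
  carrier := {f | Continuous f}
  zero_mem' := continuous_const
  add_mem' := hadd _ _
  neg_mem' := hneg _

theorem continuousOn_sum_zsmul {X T ι : Type*} [TopologicalSpace X] [TopologicalSpace T]
    [AddCommGroup T] {C : Set X}
    (hadd : ∀ f g : C → T, Continuous f → Continuous g → Continuous (f + g))
    (hneg : ∀ f : C → T, Continuous f → Continuous (-f)) (S : Finset ι) (ε : ι → ℤ)
    {f : ι → X → T} (hf : ∀ i ∈ S, ContinuousOn (f i) C) :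
    ContinuousOn (fun x => ∑ i ∈ S, ε i • f i x) C := by
  have : C.domRestrict (fun x => ∑ i ∈ S, ε i • f i x) = ∑ i ∈ S, ε i • C.domRestrict (f i) := by
    ext x; simp [Finset.sum_apply, Set.domRestrict_apply]
  rw [continuousOn_iff_continuous_domRestrict, this]
  exact AddSubgroup.sum_mem (continuousMapsAddSubgroup hadd hneg) fun i hi =>
    zsmul_mem (continuousOn_iff_continuous_domRestrict.1 (hf i hi)) _

section eSum

variable {X T ι : Type*} [Fintype ι] (D : ι → Set X) (f : ι → X → T) (ε : ι → ℤ)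

/-- `∑ εᵢ e(Dᵢ, fᵢ|Dᵢ)`: taking the `fᵢ` total avoids maps with dependent domains. -/
noncomputable def eSum : FreeAbelianGroup X →+ FreeAbelianGroup T :=
  ∑ i, ε i • eHom (D i) ((D i).domRestrict (f i))

open Classical in
theorem eSum_apply_of (x : X) :
    eSum D f ε (of x) = ∑ i with x ∈ D i, ε i • of (f i x) := by
  simp [eSum, eHom, Finset.sum_filter]

open Classical in
theorem lift_id_eSum_apply_of [AddCommGroup T] (x : X) :
    lift id (eSum D f ε (of x)) = ∑ i with x ∈ D i, ε i • f i x := by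
  simp [eSum_apply_of]

open Classical in
theorem sV_eHom_apply (V : Set T) (C : Set X) (g : X → T) (x : X) :
    sV V (eHom C (C.domRestrict g)) x = if x ∈ C ∧ g x ∈ V then 1 else 0 := by
  by_cases hx : x ∈ C <;> simp [sV, eHom, hx]

open Classical in
theorem sV_eSum_apply (V : Set T) (x : X) :
    sV V (eSum D f ε) x = ∑ i with x ∈ D i ∧ f i x ∈ V, ε i := by
  simp [eSum, sV_eHom_apply, Finset.sum_filter]

variable {D f ε} in
open Classical in
theorem sV_eSum_apply_eq_sum_fiber {Q : Finset T} {V : T → Set T}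
    (hV : (Q : Set T).PairwiseDisjoint V) {p x : X} (hQ : ∀ i, f i p ∈ Q)
    (hx : ∀ i, x ∈ D i → f i x ∈ V (f i p)) {q : T} (hq : q ∈ Q) :
    sV (V q) (eSum D f ε) x = ∑ i with x ∈ D i ∧ f i p = q, ε i := by
  rw [sV_eSum_apply]
  refine Finset.sum_congr
    (Finset.filter_congr fun i _ => and_congr_right fun hxD => ?_) fun _ _ => rfl
  exact ⟨fun hV' => hV.elim_set (hQ i) hq _ (hx i hxD) hV', fun h => h ▸ hx i hxD⟩

end eSum

theorem exists_eq_eSum_of_mem_Ksub {X T : Type*} [TopologicalSpace X] [TopologicalSpace T]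
    [Nonempty T] {u : FreeAbelianGroup X →+ FreeAbelianGroup T} (hu : u ∈ Ksub X T) :
    ∃ (n : ℕ) (D : Fin n → Set X) (f : Fin n → X → T) (ε : Fin n → ℤ),
      (∀ i, IsClosed (D i)) ∧ (∀ i, ContinuousOn (f i) (D i)) ∧ u = eSum D f ε := by
  obtain ⟨t⟩ := ‹Nonempty T›
  rw [Ksub, ← Submodule.span_int_eq_addSubgroupClosure, Submodule.mem_toAddSubgroup,
    Submodule.mem_span_set'] at hu
  obtain ⟨n, ε, w, rfl⟩ := hu
  have hgen : ∀ i, ∃ (D : Set X) (f : X → T), IsClosed D ∧ ContinuousOn f D ∧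
      (w i : FreeAbelianGroup X →+ FreeAbelianGroup T) = eHom D (D.domRestrict f) := by
    intro i
    obtain ⟨D, hD, a, ha⟩ := (w i).2
    have hext : D.domRestrict (Function.extend Subtype.val a fun _ => t) = a :=
      (Set.domRestrict_eq _ _).trans (Function.extend_comp Subtype.val_injective _ _)
    refine ⟨D, _, hD, ?_, by rw [ha, hext]⟩
    rw [continuousOn_iff_continuous_domRestrict, hext]
    exact a.continuous
  choose D f hD hf hw using hgen
  exact ⟨n, D, f, ε, hD, hf, by simp only [eSum, hw]⟩

section Eventually

variable {X T ι : Type*} [TopologicalSpace X] [TopologicalSpace T] [Finite ι] {D : ι → Set X}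

theorem eventually_forall_mem_imp_mem (hD : ∀ i, IsClosed (D i)) (p : X) :
    ∀ᶠ x in 𝓝 p, ∀ i, x ∈ D i → p ∈ D i :=
  eventually_all.2 fun i => by
    by_cases hp : p ∈ D i
    · exact Eventually.of_forall fun _ _ => hp
    · filter_upwards [(hD i).isOpen_compl.mem_nhds hp] with x hx h using absurd h hx

theorem eventually_forall_mem_imp_apply_mem (hD : ∀ i, IsClosed (D i)) {f : ι → X → T}
    (hf : ∀ i, ContinuousOn (f i) (D i)) {p : X} {W : ι → Set T} (hW : ∀ i, W i ∈ 𝓝 (f i p)) :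
    ∀ᶠ x in 𝓝 p, ∀ i, x ∈ D i → f i x ∈ W i :=
  eventually_all.2 fun i => by
    by_cases hp : p ∈ D i
    · exact mem_nhdsWithin_iff_eventually.1 (hf i p hp (hW i))
    · filter_upwards [(hD i).isOpen_compl.mem_nhds hp] with x hx h using absurd h hx

end Eventually

theorem exists_pairwiseDisjoint_eventually_sV_eq {X T : Type*} [TopologicalSpace X]
    [TopologicalSpace T] [T2Space T] {u : FreeAbelianGroup X →+ FreeAbelianGroup T} {p : X}
    (hR : ∀ q, u ∈ Rpq p q) (Q : Finset T) :
    ∃ V : T → Set T, (∀ q, IsOpen (V q) ∧ q ∈ V q) ∧ (Q : Set T).PairwiseDisjoint V ∧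
      ∀ q, ∀ᶠ x in 𝓝 p, sV (V q) u x = sV (V q) u p := by
  obtain ⟨W, hW, hWd⟩ := Q.finite_toSet.t2_separation
  choose V₀ hV₀ hqV₀ hsV using hR
  refine ⟨fun q => W q ∩ V₀ q, fun q => ⟨(hW q).2.inter (hV₀ q), (hW q).1, hqV₀ q⟩,
    hWd.mono fun q => Set.inter_subset_left, fun q => ?_⟩
  obtain ⟨U, hU, c, hc⟩ :=
    hsV q _ ((hW q).2.inter (hV₀ q)) ⟨(hW q).1, hqV₀ q⟩ Set.inter_subset_right
  filter_upwards [hU] with x hx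
  rw [hc x hx, hc p (mem_of_mem_nhds hU)]

theorem Finset.sum_zsmul_eq_of_sum_fiber_eq {ι T : Type*} [AddCommGroup T] [DecidableEq T]
    {S S' : Finset ι} {Q : Finset T} {t : ι → T} {ε : ι → ℤ} (hS : ∀ i ∈ S, t i ∈ Q)
    (hS' : ∀ i ∈ S', t i ∈ Q)
    (h : ∀ q ∈ Q, ∑ i ∈ S with t i = q, ε i = ∑ i ∈ S' with t i = q, ε i) :
    ∑ i ∈ S, ε i • t i = ∑ i ∈ S', ε i • t i := by
  have hfiber : ∀ (S : Finset ι) (q : T),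
      ∑ i ∈ S with t i = q, ε i • t i = (∑ i ∈ S with t i = q, ε i) • q := by
    intro S q
    rw [Finset.sum_smul]
    exact Finset.sum_congr rfl fun i hi => by rw [(Finset.mem_filter.1 hi).2]
  rw [← Finset.sum_fiberwise_of_maps_to hS, ← Finset.sum_fiberwise_of_maps_to hS']
  exact Finset.sum_congr rfl fun q hq => by rw [hfiber, hfiber, h q hq]

section Core

variable {X T ι : Type*} [TopologicalSpace X] [TopologicalSpace T] [Fintype ι]
  {D : ι → Set X} {f : ι → X → T} {ε : ι → ℤ}

open Classical in
theorem eventually_sum_zsmul_eq [T2Space T] [AddCommGroup T] (hD : ∀ i, IsClosed (D i))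
    (hf : ∀ i, ContinuousOn (f i) (D i)) {p : X} (hR : ∀ q, eSum D f ε ∈ Rpq p q) :
    ∀ᶠ x in 𝓝 p, ∑ i with x ∈ D i, ε i • f i p = ∑ i with p ∈ D i, ε i • f i p := by
  set Q := Finset.univ.image fun i => f i p
  have hQ : ∀ i, f i p ∈ Q := fun i => Finset.mem_image_of_mem _ (Finset.mem_univ i)
  obtain ⟨V, hV, hVd, hsV⟩ := exists_pairwiseDisjoint_eventually_sV_eq hR Q
  filter_upwards [eventually_forall_mem_imp_apply_mem hD hf fun i => (hV _).1.mem_nhds (hV _).2,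
    (Q.eventually_all).2 fun q _ => hsV q] with x hx hxsV
  refine Finset.sum_zsmul_eq_of_sum_fiber_eq (fun i _ => hQ i) (fun i _ => hQ i) fun q hq => ?_
  rw [Finset.filter_filter, Finset.filter_filter, ← sV_eSum_apply_eq_sum_fiber hVd hQ hx hq,
    ← sV_eSum_apply_eq_sum_fiber hVd hQ (fun i _ => (hV _).2) hq, hxsV q hq]

end Core

/-- **Lemma 6.6.** If `T` is a Hausdorff space with an abelian group structure such that
continuous maps from closed subsets of `X` to `T` are closed under pointwise sum and
negation, then `G(u)` is continuous for every `u ∈ K ∩ R`. -/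
theorem continuous_G_of_mem_Ksub_inf_Rsub (X T : Type*) [TopologicalSpace X]
    [TopologicalSpace T] [T2Space T] [AddCommGroup T]
    (hadd : ∀ D : Set X, IsClosed D → ∀ f g : D → T,
      Continuous f → Continuous g → Continuous (f + g))
    (hneg : ∀ D : Set X, IsClosed D → ∀ f : D → T, Continuous f → Continuous (-f))
    (u : FreeAbelianGroup X →+ FreeAbelianGroup T) (hu : u ∈ Ksub X T ⊓ Rsub X T) :
    Continuous fun x : X => FreeAbelianGroup.lift (id : T → T) (u (FreeAbelianGroup.of x)) := by
  classical
  obtain ⟨n, D, f, ε, hD, hf, rfl⟩ := exists_eq_eSum_of_mem_Ksub hu.1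
  have hR : ∀ p q, eSum D f ε ∈ Rpq p q := fun p q =>
    AddSubgroup.mem_iInf.1 (AddSubgroup.mem_iInf.1 hu.2 p) q
  have hC : ∀ S : Finset (Fin n), IsClosed (⋂ i ∈ S, D i) := fun S =>
    isClosed_biInter fun i _ => hD i
  refine continuous_iff_continuousAt.2 fun p =>
    continuousAt_of_eventually_exists_eq_continuousOn (C := fun S => ⋂ i ∈ S, D i)
      (g := fun S x => ∑ i ∈ S, ε i • f i x)
      (fun S => continuousOn_sum_zsmul (hadd _ (hC S)) (hneg _ (hC S)) S ε fun i hi =>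
        (hf i).mono (Set.biInter_subset_of_mem hi)) ?_
  filter_upwards [eventually_forall_mem_imp_mem hD p, eventually_sum_zsmul_eq hD hf (hR p)]
    with x hxp hsum
  refine ⟨({i | x ∈ D i} : Finset _), ?_, ?_, lift_id_eSum_apply_of D f ε x, ?_⟩
  · simpa using hxp
  · simp
  · rw [lift_id_eSum_apply_of]
    exact hsum
end

section
/- Let X be a topological space, T a topological abelian group, M a divisible abelian group, and f : C(X,T) → M a function such that f(a) = f(b) whenever a and b are homotopic, and f(a + b) = f(a) + f(b) for all continuous a, b : X → T (with pointwise addition). Then f is a straight homotopy invariant. -/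
/-!
By additivity, `f` extends to formal sums of maps, `Σ nᵢ⟨aᵢ⟩ ↦ f (Σ nᵢ aᵢ)`. A formal sum whose
image `Σ nᵢ ⟨aᵢ⟩` in `L(X,T)` vanishes has vanishing pointwise sum `Σ nᵢ aᵢ`, because that sum
can be read off from the image: `(Σ nᵢ aᵢ)(x)` is obtained by summing, in `T`, the formal
combination `(Σ nᵢ ⟨aᵢ⟩)⟨x⟩ ∈ ⟨T⟩`. Hence the extension descends to the subgroup of `L(X,T)`
spanned by the `⟨a⟩`, and since a divisible group is injective it extends to all of `L(X,T)`.
-/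

theorem Module.Baer.exists_comp_eq_of_ker_le {G B M : Type*} [AddCommGroup G] [AddCommGroup B]
    [AddCommGroup M] (hM : Module.Baer ℤ M) (p : G →+ B) (g : G →+ M) (h : p.ker ≤ g.ker) :
    ∃ F : B →+ M, F.comp p = g := by
  obtain ⟨F, hF⟩ := hM.extension_property_addMonoidHom (QuotientAddGroup.kerLift p)
    (QuotientAddGroup.kerLift_injective p) (QuotientAddGroup.lift p.ker g h)
  exact ⟨F, AddMonoidHom.ext fun z => DFunLike.congr_fun hF (z : G ⧸ p.ker)⟩

def evalSum (X T : Type*) [AddCommGroup T] :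
    (FreeAbelianGroup X →+ FreeAbelianGroup T) →+ (X → T) where
  toFun u x := FreeAbelianGroup.lift id (u (FreeAbelianGroup.of x))
  map_zero' := by ext; simp
  map_add' u v := by ext; simp

lemma evalSum_inducedHom {X T : Type*} [AddCommGroup T] (a : X → T) :
    evalSum X T (inducedHom a) = a := by
  ext x
  simp [evalSum, inducedHom]

lemma evalSum_lift_inducedL {ι X T : Type*} [AddCommGroup T] (φ : ι → X → T)
    (z : FreeAbelianGroup ι) :
    evalSum X T (FreeAbelianGroup.lift (fun i => inducedL (φ i)) z) =
      FreeAbelianGroup.lift φ z := by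
  induction z using FreeAbelianGroup.induction_on with
  | zero => simp
  | of i => simp [inducedL, evalSum_inducedHom]
  | neg i ih => simp_all
  | add z w hz hw => simp_all

lemma ker_lift_inducedL_le_ker_lift_id (X T : Type*) [TopologicalSpace X] [TopologicalSpace T]
    [AddCommGroup T] [IsTopologicalAddGroup T] :
    (FreeAbelianGroup.lift fun a : C(X, T) => inducedL a).ker ≤
      (FreeAbelianGroup.lift (id : C(X, T) → C(X, T))).ker := by
  intro z hz
  rw [AddMonoidHom.mem_ker] at hz ⊢
  apply ContinuousMap.coe_injective
  calc ⇑(FreeAbelianGroup.lift id z)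
      = FreeAbelianGroup.lift (fun a : C(X, T) => ⇑a) z :=
        (FreeAbelianGroup.lift_comp_apply z id ContinuousMap.coeFnAddMonoidHom).symm
    _ = evalSum X T (FreeAbelianGroup.lift (fun a : C(X, T) => inducedL a) z) :=
        (evalSum_lift_inducedL _ z).symm
    _ = ⇑(0 : C(X, T)) := by simp [hz]

theorem additive_invariant_isStraight_of_divisible_general (X T M : Type*) [TopologicalSpace X]
    [TopologicalSpace T] [AddCommGroup T] [IsTopologicalAddGroup T] [AddCommGroup M]
    (hdiv : ∀ (m : M) (n : ℤ), n ≠ 0 → ∃ m' : M, n • m' = m)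
    (f : C(X, T) → M)
    (hadd : ∀ a b : C(X, T), f (a + b) = f a + f b) :
    IsStraight f := by
  let _ : DivisibleBy M ℤ := divisibleByOfSMulRightSurj M ℤ fun hn m => hdiv m _ hn
  let g : FreeAbelianGroup C(X, T) →+ M :=
    (AddMonoidHom.mk' f hadd).comp (FreeAbelianGroup.lift id)
  have hker : (FreeAbelianGroup.lift fun a : C(X, T) => inducedL a).ker ≤ g.ker := by
    refine (ker_lift_inducedL_le_ker_lift_id X T).trans ?_
    rw [← AddMonoidHom.comap_ker]
    exact AddMonoidHom.ker_le_comap _ _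
  obtain ⟨F, hF⟩ := (Module.Baer.of_divisible M).exists_comp_eq_of_ker_le _ g hker
  refine ⟨F, fun a => ?_⟩
  simpa [g] using (DFunLike.congr_fun hF (FreeAbelianGroup.of a)).symm

/-- **Lemma 7.1.** For `X` a space, `T` a topological abelian group, and `M` a divisible
abelian group, every additive homotopy invariant `f : C(X,T) → M` is straight. -/
theorem additive_invariant_isStraight_of_divisible (X T M : Type*) [TopologicalSpace X]
    [TopologicalSpace T] [AddCommGroup T] [IsTopologicalAddGroup T] [AddCommGroup M]
    (hdiv : ∀ (m : M) (n : ℤ), n ≠ 0 → ∃ m' : M, n • m' = m)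
    (f : C(X, T) → M) (hf : IsHomotopyInvariant f)
    (hadd : ∀ a b : C(X, T), f (a + b) = f a + f b) :
    IsStraight f :=
  additive_invariant_isStraight_of_divisible_general X T M hdiv f hadd
end
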